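/- Let n ≥ 1, let m : ℝⁿ → ℝ be a continuous ℤⁿ-periodic function with m(x) > 0 for all x, let χ : ℝⁿ → ℝ be a C¹ ℤⁿ-periodic function, and let ν ∈ ℝⁿ. If ∫_{[0,1]ⁿ} |ν + ∇χ(x)|² m(x) dx = 0, then ν = 0. -/

import Mathlib

/-! Since the integrand is continuous and nonnegative and `m > 0`, the vanishing of the integral
forces `∇χ = -ν` on the open unit cube. On a segment parallel to `eᵢ` joining two opposite faces
of the cube, `χ` takes equal values at the endpoints by periodicity, so by Rolle's theorem
`∂ᵢχ = -νᵢ` vanishes at some interior point. -/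

open scoped RealInnerProductSpace
open MeasureTheory

/-- The Euclidean Laplacian: sum of second partial derivatives. -/
noncomputable def lap {n : ℕ} (f : EuclideanSpace ℝ (Fin n) → ℝ)
    (x : EuclideanSpace ℝ (Fin n)) : ℝ :=
  ∑ i : Fin n,
    fderiv ℝ (fun y => fderiv ℝ f y (EuclideanSpace.single i 1)) x (EuclideanSpace.single i 1)

/-- The divergence of a vector field: sum of partial derivatives of the components. -/
noncomputable def dvg {n : ℕ} (F : EuclideanSpace ℝ (Fin n) → EuclideanSpace ℝ (Fin n))
    (x : EuclideanSpace ℝ (Fin n)) : ℝ :=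
  ∑ i : Fin n, fderiv ℝ (fun y => F y i) x (EuclideanSpace.single i 1)

/-- A function on ℝⁿ is ℤⁿ-periodic if it is invariant under translation by
every integer vector. -/
def IsZnPeriodic {n : ℕ} {α : Type*} (f : EuclideanSpace ℝ (Fin n) → α) : Prop :=
  ∀ (x : EuclideanSpace ℝ (Fin n)) (k : Fin n → ℤ),
    f (x + ∑ i : Fin n, (k i : ℝ) • EuclideanSpace.single i (1 : ℝ)) = f x

/-- The unit cube [0,1]ⁿ in ℝⁿ. -/
def unitCube (n : ℕ) : Set (EuclideanSpace ℝ (Fin n)) :=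
  {x | ∀ i, x i ∈ Set.Icc (0 : ℝ) 1}

open Set

theorem ContDiff.continuous_gradient {F : Type*} [NormedAddCommGroup F] [InnerProductSpace ℝ F]
    [CompleteSpace F] {f : F → ℝ} (hf : ContDiff ℝ 1 f) : Continuous (gradient f) :=
  (InnerProductSpace.toDual ℝ F).symm.continuous.comp (hf.continuous_fderiv one_ne_zero)

theorem eqOn_zero_interior_of_setIntegral_eq_zero {X : Type*} [TopologicalSpace X] [T2Space X]
    [MeasurableSpace X] [OpensMeasurableSpace X] {μ : Measure X} [μ.IsOpenPosMeasure]
    [IsFiniteMeasureOnCompacts μ] {f : X → ℝ} {s : Set X} (hs : IsCompact s)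
    (hf : ContinuousOn f s) (hf0 : ∀ x ∈ s, 0 ≤ f x) (h : ∫ x in s, f x ∂μ = 0) :
    EqOn f 0 (interior s) := by
  have hae : f =ᵐ[μ.restrict s] 0 :=
    (setIntegral_eq_zero_iff_of_nonneg_ae (ae_restrict_of_forall_mem hs.measurableSet hf0)
      (hf.integrableOn_compact hs)).mp h
  exact Measure.eqOn_open_of_ae_eq (ae_restrict_of_ae_restrict_of_subset interior_subset hae)
    isOpen_interior (hf.mono interior_subset) continuousOn_const

theorem exists_mem_Ioo_fderiv_apply_eq_zero {E : Type*} [NormedAddCommGroup E] [NormedSpace ℝ E]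
    {f : E → ℝ} (hf : Differentiable ℝ f) {v : E} (hv : ∀ x, f (x + v) = f x) (p : E) :
    ∃ t ∈ Ioo (0 : ℝ) 1, fderiv ℝ f (p + t • v) v = 0 := by
  have hline : ∀ t : ℝ, HasDerivAt (fun s : ℝ => f (p + s • v)) (fderiv ℝ f (p + t • v) v) t := by
    intro t
    have hseg : HasDerivAt (fun s : ℝ => p + s • v) v t := by
      simpa using ((hasDerivAt_id t).smul_const v).const_add p
    exact (hf _).hasFDerivAt.comp_hasDerivAt t hseg
  refine exists_hasDerivAt_eq_zero zero_lt_one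
    (fun t _ => (hline t).continuousAt.continuousWithinAt) ?_ fun t _ => hline t
  simp [hv]

theorem unitCube_eq_preimage (n : ℕ) :
    unitCube n =
      (PiLp.continuousLinearEquiv 2 ℝ fun _ : Fin n => ℝ) ⁻¹' univ.pi fun _ => Icc 0 1 := by
  ext x; simp [unitCube, Pi.le_def, forall_and]

theorem isCompact_unitCube (n : ℕ) : IsCompact (unitCube n) := by
  rw [unitCube_eq_preimage, ← ContinuousLinearEquiv.coe_toHomeomorph, Homeomorph.isCompact_preimage]
  exact isCompact_univ_pi fun _ => isCompact_Icc

theorem mem_interior_unitCube {n : ℕ} {x : EuclideanSpace ℝ (Fin n)} :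
    x ∈ interior (unitCube n) ↔ ∀ i, x i ∈ Ioo 0 1 := by
  rw [unitCube_eq_preimage, ← ContinuousLinearEquiv.coe_toHomeomorph,
    ← Homeomorph.preimage_interior, interior_pi_set finite_univ]
  simp

theorem IsZnPeriodic.add_single {n : ℕ} {α : Type*} {f : EuclideanSpace ℝ (Fin n) → α}
    (hf : IsZnPeriodic f) (x : EuclideanSpace ℝ (Fin n)) (i : Fin n) :
    f (x + EuclideanSpace.single i 1) = f x := by
  simpa [Pi.single_apply, ite_smul] using hf x (Pi.single i 1)

theorem update_add_smul_single_mem_interior_unitCube {n : ℕ} (i : Fin n) {t : ℝ}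
    (ht : t ∈ Ioo 0 1) :
    WithLp.toLp 2 (Function.update (fun _ => 1 / 2) i 0) + t • EuclideanSpace.single i 1 ∈
      interior (unitCube n) := by
  rw [mem_interior_unitCube]
  intro j
  rcases eq_or_ne j i with rfl | hji
  · simpa using ht
  · norm_num [hji]

theorem effective_diffusion_nondegenerate_general (n : ℕ)
    (m : EuclideanSpace ℝ (Fin n) → ℝ) (hmc : Continuous m)
    (hmpos : ∀ x, 0 < m x)
    (χ : EuclideanSpace ℝ (Fin n) → ℝ) (hχ : ContDiff ℝ 1 χ) (hχp : IsZnPeriodic χ)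
    (ν : EuclideanSpace ℝ (Fin n))
    (hzero : ∫ x in unitCube n, ‖ν + gradient χ x‖^2 * m x = 0) :
    ν = 0 := by
  have hflat : ∀ x ∈ interior (unitCube n), ν + gradient χ x = 0 := by
    intro x hx
    have hvanish := eqOn_zero_interior_of_setIntegral_eq_zero (isCompact_unitCube n)
      (((continuous_const.add hχ.continuous_gradient).norm.pow 2).mul hmc).continuousOn
      (fun x _ => mul_nonneg (sq_nonneg _) (hmpos x).le) hzero hx
    simpa [(hmpos x).ne'] using hvanish
  ext i
  obtain ⟨t, ht, hderiv⟩ := exists_mem_Ioo_fderiv_apply_eq_zero (hχ.differentiable one_ne_zero)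
    (hχp.add_single · i) (WithLp.toLp 2 (Function.update (fun _ => 1 / 2) i 0))
  rw [← inner_gradient_left, EuclideanSpace.inner_single_right, conj_trivial, one_mul] at hderiv
  have hνi := congrArg (· i) (hflat _ (update_add_smul_single_mem_interior_unitCube i ht))
  simpa only [PiLp.add_apply, PiLp.zero_apply, hderiv, add_zero] using hνi

/-- if m > 0 is continuous ℤⁿ-periodic, χ is C¹ ℤⁿ-periodic, and
∫_{[0,1]ⁿ} |ν + ∇χ|² m dx = 0, then ν = 0. -/
theorem effective_diffusion_nondegenerate (n : ℕ) (hn : 1 ≤ n)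
    (m : EuclideanSpace ℝ (Fin n) → ℝ) (hmc : Continuous m) (hmp : IsZnPeriodic m)
    (hmpos : ∀ x, 0 < m x)
    (χ : EuclideanSpace ℝ (Fin n) → ℝ) (hχ : ContDiff ℝ 1 χ) (hχp : IsZnPeriodic χ)
    (ν : EuclideanSpace ℝ (Fin n))
    (hzero : ∫ x in unitCube n, ‖ν + gradient χ x‖^2 * m x = 0) :
    ν = 0 :=
  effective_diffusion_nondegenerate_general n m hmc hmpos χ hχ hχp ν hzero
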